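/- arXiv:2109.03602 — 4 statements merged into one kernel-verified Lean document; each statement's English description precedes it below -/
import Mathlib

section
/- The release permission splits along disjunction of invariants: ⟦Rel(ℓ, λv. Q1(v) ∨ Q2(v))⟧ = ⟦Rel(ℓ, Q1) ⋆ Rel(ℓ, Q2)⟧. -/
namespace SecRSL7

/-- An atomic heap cell: release invariant, acquire invariant, RMW flag, init flag. -/
structure Cell (Val Assn : Type) where
  rel : Val → Assn
  acq : Val → Assn
  rmw : Bool
  init : Bool

variable {Loc Val Assn : Type}

open scoped Classical in
/-- Combination of atomic cells: release invariants combine by disjunction,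
acquire invariants by separating conjunction, flags by boolean or; when both
RMW flags are set the acquire invariants must be equal and are kept. -/
noncomputable def cellComb (orA starA : Assn → Assn → Assn) (c1 c2 : Cell Val Assn) :
    Option (Cell Val Assn) :=
  if c1.rmw = true ∧ c2.rmw = true then
    if c1.acq = c2.acq then
      some ⟨fun v => orA (c1.rel v) (c2.rel v), c1.acq, true, c1.init || c2.init⟩
    else none
  else
    some ⟨fun v => orA (c1.rel v) (c2.rel v), fun v => starA (c1.acq v) (c2.acq v),
      c1.rmw || c2.rmw, c1.init || c2.init⟩

def Heap (Loc Val Assn : Type) := Loc → Option (Cell Val Assn)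

open scoped Classical in
/-- Pointwise partial heap combination. -/
noncomputable def heapComb (orA starA : Assn → Assn → Assn)
    (h1 h2 : Heap Loc Val Assn) : Option (Heap Loc Val Assn) :=
  if ∀ ℓ c1 c2, h1 ℓ = some c1 → h2 ℓ = some c2 → (cellComb orA starA c1 c2).isSome then
    some (fun ℓ =>
      match h1 ℓ, h2 ℓ with
      | some c1, some c2 => cellComb orA starA c1 c2
      | some c1, none => some c1
      | none, x => x)
  else none

/-- Relational separating conjunction. -/
noncomputable def star (orA starA : Assn → Assn → Assn)
    (P Q : Set (Heap Loc Val Assn × Heap Loc Val Assn)) :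
    Set (Heap Loc Val Assn × Heap Loc Val Assn) :=
  {p | ∃ h1 h1' h2 h2', (h1, h1') ∈ P ∧ (h2, h2') ∈ Q ∧
        heapComb orA starA h1 h2 = some p.1 ∧ heapComb orA starA h1' h2' = some p.2}

open scoped Classical in
/-- Singleton heap. -/
noncomputable def sing (ℓ : Loc) (c : Cell Val Assn) : Heap Loc Val Assn :=
  fun ℓ' => if ℓ' = ℓ then some c else none

/-- Semantics of Rel(ℓ, Q): the atomic cell Atom(Q, Emp, false, false), in both heaps. -/
noncomputable def relSem (empA : Assn) (ℓ : Loc) (Q : Val → Assn) :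
    Set (Heap Loc Val Assn × Heap Loc Val Assn) :=
  {p | p = (sing ℓ ⟨Q, fun _ => empA, false, false⟩,
            sing ℓ ⟨Q, fun _ => empA, false, false⟩)}

lemma cellComb_of_rmw_eq_false_left (orA starA : Assn → Assn → Assn) {c1 c2 : Cell Val Assn}
    (h : c1.rmw = false) :
    cellComb orA starA c1 c2 =
      some ⟨fun v => orA (c1.rel v) (c2.rel v), fun v => starA (c1.acq v) (c2.acq v),
        c2.rmw, c1.init || c2.init⟩ := by
  simp [cellComb, h]

lemma heapComb_sing_sing (orA starA : Assn → Assn → Assn) (ℓ : Loc) (c1 c2 : Cell Val Assn) :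
    heapComb orA starA (sing ℓ c1) (sing ℓ c2) = (cellComb orA starA c1 c2).map (sing ℓ) := by
  cases hc : cellComb orA starA c1 c2 with
  | none =>
    rw [heapComb, if_neg]
    · rfl
    · push Not
      exact ⟨ℓ, c1, c2, by simp [sing], by simp [sing], by simp [hc]⟩
  | some c =>
    rw [heapComb, if_pos]
    · congr 1
      funext ℓ'
      by_cases hℓ : ℓ' = ℓ <;> simp [sing, hℓ, hc]
    · intro ℓ' d1 d2 h1 h2
      by_cases hℓ : ℓ' = ℓ <;> simp only [sing, hℓ, if_true, if_false, reduceCtorEq,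
        Option.some_inj] at h1 h2
      simp [← h1, ← h2, hc]

lemma mem_star_singleton (orA starA : Assn → Assn → Assn) (h1 h1' h2 h2' : Heap Loc Val Assn)
    (p : Heap Loc Val Assn × Heap Loc Val Assn) :
    p ∈ star orA starA {(h1, h1')} {(h2, h2')} ↔
      heapComb orA starA h1 h2 = some p.1 ∧ heapComb orA starA h1' h2' = some p.2 := by
  constructor
  · rintro ⟨_, _, _, _, ⟨⟩, ⟨⟩, hc, hc'⟩
    exact ⟨hc, hc'⟩
  · rintro ⟨hc, hc'⟩
    exact ⟨h1, h1', h2, h2', rfl, rfl, hc, hc'⟩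

lemma relSem_eq_singleton (empA : Assn) (ℓ : Loc) (Q : Val → Assn) :
    relSem empA ℓ Q =
      {(sing ℓ ⟨Q, fun _ => empA, false, false⟩, sing ℓ ⟨Q, fun _ => empA, false, false⟩)} :=
  rfl

theorem rel_split (orA starA : Assn → Assn → Assn) (empA : Assn)
    (hEE : starA empA empA = empA) (ℓ : Loc) (Q1 Q2 : Val → Assn) :
    relSem empA ℓ (fun v => orA (Q1 v) (Q2 v)) =
      star orA starA (relSem empA ℓ Q1) (relSem empA ℓ Q2) := by
  have hcomb : heapComb orA starA (sing ℓ ⟨Q1, fun _ => empA, false, false⟩)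
      (sing ℓ ⟨Q2, fun _ => empA, false, false⟩) =
        some (sing ℓ ⟨fun v => orA (Q1 v) (Q2 v), fun _ => empA, false, false⟩) := by
    rw [heapComb_sing_sing, cellComb_of_rmw_eq_false_left orA starA rfl]
    simp only [hEE, Bool.or_false, Option.map_some]
  ext p
  simp only [relSem_eq_singleton, mem_star_singleton, hcomb, Set.mem_singleton_iff, Option.some_inj,
    Prod.ext_iff, eq_comm]

end SecRSL7
end

section
/- The acquire permission splits along separating conjunction of invariants: ⟦Acq(ℓ, λv. Q1(v) ⋆ Q2(v))⟧ = ⟦Acq(ℓ, Q1) ⋆ Acq(ℓ, Q2)⟧. -/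
namespace SecRSL8

/-- An atomic heap cell: release invariant, acquire invariant, RMW flag, init flag. -/
structure Cell (Val Assn : Type) where
  rel : Val → Assn
  acq : Val → Assn
  rmw : Bool
  init : Bool

variable {Loc Val Assn : Type}

open scoped Classical in
/-- Combination of atomic cells: release invariants combine by disjunction,
acquire invariants by separating conjunction, flags by boolean or; when both
RMW flags are set the acquire invariants must be equal and are kept. -/
noncomputable def cellComb (orA starA : Assn → Assn → Assn) (c1 c2 : Cell Val Assn) :
    Option (Cell Val Assn) :=
  if c1.rmw = true ∧ c2.rmw = true then
    if c1.acq = c2.acq then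
      some ⟨fun v => orA (c1.rel v) (c2.rel v), c1.acq, true, c1.init || c2.init⟩
    else none
  else
    some ⟨fun v => orA (c1.rel v) (c2.rel v), fun v => starA (c1.acq v) (c2.acq v),
      c1.rmw || c2.rmw, c1.init || c2.init⟩

def Heap (Loc Val Assn : Type) := Loc → Option (Cell Val Assn)

open scoped Classical in
/-- Pointwise partial heap combination. -/
noncomputable def heapComb (orA starA : Assn → Assn → Assn)
    (h1 h2 : Heap Loc Val Assn) : Option (Heap Loc Val Assn) :=
  if ∀ ℓ c1 c2, h1 ℓ = some c1 → h2 ℓ = some c2 → (cellComb orA starA c1 c2).isSome then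
    some (fun ℓ =>
      match h1 ℓ, h2 ℓ with
      | some c1, some c2 => cellComb orA starA c1 c2
      | some c1, none => some c1
      | none, x => x)
  else none

/-- Relational separating conjunction. -/
noncomputable def star (orA starA : Assn → Assn → Assn)
    (P Q : Set (Heap Loc Val Assn × Heap Loc Val Assn)) :
    Set (Heap Loc Val Assn × Heap Loc Val Assn) :=
  {p | ∃ h1 h1' h2 h2', (h1, h1') ∈ P ∧ (h2, h2') ∈ Q ∧
        heapComb orA starA h1 h2 = some p.1 ∧ heapComb orA starA h1' h2' = some p.2}

open scoped Classical in
/-- Singleton heap. -/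
noncomputable def sing (ℓ : Loc) (c : Cell Val Assn) : Heap Loc Val Assn :=
  fun ℓ' => if ℓ' = ℓ then some c else none

/-- Semantics of Acq(ℓ, Q): the atomic cell Atom(False, Q, false, false), in both heaps. -/
noncomputable def acqSem (falseA : Assn) (ℓ : Loc) (Q : Val → Assn) :
    Set (Heap Loc Val Assn × Heap Loc Val Assn) :=
  {p | p = (sing ℓ ⟨fun _ => falseA, Q, false, false⟩,
            sing ℓ ⟨fun _ => falseA, Q, false, false⟩)}

section Combination

variable (orA starA : Assn → Assn → Assn)

theorem cellComb_of_rmw_eq_false_left (c1 c2 : Cell Val Assn) (h : c1.rmw = false) :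
    cellComb orA starA c1 c2 =
      some ⟨fun v => orA (c1.rel v) (c2.rel v), fun v => starA (c1.acq v) (c2.acq v),
        c2.rmw, c1.init || c2.init⟩ := by
  simp [cellComb, h]

theorem heapComb_sing_sing {ℓ : Loc} {c1 c2 c : Cell Val Assn}
    (hc : cellComb orA starA c1 c2 = some c) :
    heapComb orA starA (sing ℓ c1) (sing ℓ c2) = some (sing ℓ c) := by
  classical
  have hcompat : ∀ ℓ' a b, sing ℓ c1 ℓ' = some a → sing ℓ c2 ℓ' = some b →
      (cellComb orA starA a b).isSome := by
    intro ℓ' a b ha hb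
    by_cases h : ℓ' = ℓ
    · simp only [sing, h, if_true, Option.some.injEq] at ha hb
      simp [← ha, ← hb, hc]
    · simp [sing, h] at ha
  rw [heapComb, if_pos hcompat]
  congr 1
  funext ℓ'
  by_cases h : ℓ' = ℓ <;> simp [sing, h, hc]

theorem star_singleton_singleton {h1 h1' h2 h2' h h' : Heap Loc Val Assn}
    (hc : heapComb orA starA h1 h2 = some h) (hc' : heapComb orA starA h1' h2' = some h') :
    star orA starA {(h1, h1')} {(h2, h2')} = {(h, h')} := by
  ext ⟨p, p'⟩
  simp [star, hc, hc', eq_comm]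

end Combination

theorem acqSem_eq_singleton (falseA : Assn) (ℓ : Loc) (Q : Val → Assn) :
    acqSem falseA ℓ Q =
      {(sing ℓ ⟨fun _ => falseA, Q, false, false⟩, sing ℓ ⟨fun _ => falseA, Q, false, false⟩)} :=
  rfl

theorem acq_split (orA starA : Assn → Assn → Assn) (falseA : Assn)
    (hFF : orA falseA falseA = falseA) (ℓ : Loc) (Q1 Q2 : Val → Assn) :
    acqSem falseA ℓ (fun v => starA (Q1 v) (Q2 v)) =
      star orA starA (acqSem falseA ℓ Q1) (acqSem falseA ℓ Q2) := by
  have hcell : cellComb orA starA ⟨fun _ => falseA, Q1, false, false⟩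
      ⟨fun _ => falseA, Q2, false, false⟩ =
      some ⟨fun _ => falseA, fun v => starA (Q1 v) (Q2 v), false, false⟩ := by
    simp [cellComb_of_rmw_eq_false_left, hFF]
  have hheap := heapComb_sing_sing orA starA (ℓ := ℓ) hcell
  simp only [acqSem_eq_singleton, star_singleton_singleton orA starA hheap hheap]

end SecRSL8
end

section
/- The RMW permission is duplicable: ⟦RMWAcq(ℓ, Q)⟧ = ⟦RMWAcq(ℓ, Q) ⋆ RMWAcq(ℓ, Q)⟧, given that when the RMW flag is set, combining two acquire invariants Q results again in Q (RMW acquire parts combine idempotently). -/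
namespace SecRSL9

/-- An atomic heap cell: release invariant, acquire invariant, RMW flag, init flag. -/
structure Cell (Val Assn : Type) where
  rel : Val → Assn
  acq : Val → Assn
  rmw : Bool
  init : Bool

variable {Loc Val Assn : Type}

open scoped Classical in
/-- Combination of atomic cells: release invariants combine by disjunction,
acquire invariants by separating conjunction, flags by boolean or; when both
RMW flags are set the acquire invariants must be equal and are kept. -/
noncomputable def cellComb (orA starA : Assn → Assn → Assn) (c1 c2 : Cell Val Assn) :
    Option (Cell Val Assn) :=
  if c1.rmw = true ∧ c2.rmw = true then
    if c1.acq = c2.acq then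
      some ⟨fun v => orA (c1.rel v) (c2.rel v), c1.acq, true, c1.init || c2.init⟩
    else none
  else
    some ⟨fun v => orA (c1.rel v) (c2.rel v), fun v => starA (c1.acq v) (c2.acq v),
      c1.rmw || c2.rmw, c1.init || c2.init⟩

def Heap (Loc Val Assn : Type) := Loc → Option (Cell Val Assn)

open scoped Classical in
/-- Pointwise partial heap combination. -/
noncomputable def heapComb (orA starA : Assn → Assn → Assn)
    (h1 h2 : Heap Loc Val Assn) : Option (Heap Loc Val Assn) :=
  if ∀ ℓ c1 c2, h1 ℓ = some c1 → h2 ℓ = some c2 → (cellComb orA starA c1 c2).isSome then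
    some (fun ℓ =>
      match h1 ℓ, h2 ℓ with
      | some c1, some c2 => cellComb orA starA c1 c2
      | some c1, none => some c1
      | none, x => x)
  else none

/-- Relational separating conjunction. -/
noncomputable def star (orA starA : Assn → Assn → Assn)
    (P Q : Set (Heap Loc Val Assn × Heap Loc Val Assn)) :
    Set (Heap Loc Val Assn × Heap Loc Val Assn) :=
  {p | ∃ h1 h1' h2 h2', (h1, h1') ∈ P ∧ (h2, h2') ∈ Q ∧
        heapComb orA starA h1 h2 = some p.1 ∧ heapComb orA starA h1' h2' = some p.2}

open scoped Classical in
/-- Singleton heap. -/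
noncomputable def sing (ℓ : Loc) (c : Cell Val Assn) : Heap Loc Val Assn :=
  fun ℓ' => if ℓ' = ℓ then some c else none

/-- Semantics of RMWAcq(ℓ, Q): the atomic cell Atom(False, Q, true, false), in both heaps. -/
noncomputable def rmwSem (falseA : Assn) (ℓ : Loc) (Q : Val → Assn) :
    Set (Heap Loc Val Assn × Heap Loc Val Assn) :=
  {p | p = (sing ℓ ⟨fun _ => falseA, Q, true, false⟩,
            sing ℓ ⟨fun _ => falseA, Q, true, false⟩)}

theorem cellComb_self_of_rmw (orA starA : Assn → Assn → Assn) {c : Cell Val Assn}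
    (hrel : ∀ v, orA (c.rel v) (c.rel v) = c.rel v) (hrmw : c.rmw = true) :
    cellComb orA starA c c = some c := by
  obtain ⟨rel, acq, rmw, init⟩ := c
  subst hrmw
  simp [cellComb, hrel]

theorem heapComb_sing_sing {orA starA : Assn → Assn → Assn} (ℓ : Loc)
    {c1 c2 c : Cell Val Assn} (h : cellComb orA starA c1 c2 = some c) :
    heapComb orA starA (sing ℓ c1) (sing ℓ c2) = some (sing ℓ c) := by
  have hdef : ∀ ℓ' d1 d2, sing ℓ c1 ℓ' = some d1 → sing ℓ c2 ℓ' = some d2 →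
      (cellComb orA starA d1 d2).isSome := by
    intro ℓ' d1 d2 h1 h2
    by_cases hℓ : ℓ' = ℓ
    · simp only [sing, hℓ, if_true, Option.some.injEq] at h1 h2
      simp [← h1, ← h2, h]
    · simp [sing, hℓ] at h1
  rw [heapComb, if_pos hdef]
  congr 1
  funext ℓ'
  by_cases hℓ : ℓ' = ℓ <;> simp [sing, hℓ, h]

theorem star_singleton_singleton {orA starA : Assn → Assn → Assn}
    {a b c : Heap Loc Val Assn × Heap Loc Val Assn}
    (h1 : heapComb orA starA a.1 b.1 = some c.1) (h2 : heapComb orA starA a.2 b.2 = some c.2) :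
    star orA starA {a} {b} = {c} := by
  ext p
  simp only [star, Set.mem_singleton_iff, Set.mem_ofPred_eq]
  constructor
  · rintro ⟨_, _, _, _, rfl, rfl, hp1, hp2⟩
    exact Prod.ext (Option.some.inj (hp1.symm.trans h1)) (Option.some.inj (hp2.symm.trans h2))
  · rintro rfl
    exact ⟨_, _, _, _, rfl, rfl, h1, h2⟩

theorem rmwSem_eq_singleton (falseA : Assn) (ℓ : Loc) (Q : Val → Assn) :
    rmwSem falseA ℓ Q = {(sing ℓ ⟨fun _ => falseA, Q, true, false⟩,
      sing ℓ ⟨fun _ => falseA, Q, true, false⟩)} :=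
  rfl

theorem rmw_duplicable (orA starA : Assn → Assn → Assn) (falseA : Assn)
    (hFF : orA falseA falseA = falseA) (ℓ : Loc) (Q : Val → Assn) :
    rmwSem (Val := Val) falseA ℓ Q =
      star orA starA (rmwSem falseA ℓ Q) (rmwSem falseA ℓ Q) := by
  set c : Cell Val Assn := ⟨fun _ => falseA, Q, true, false⟩
  have hc : heapComb orA starA (sing ℓ c) (sing ℓ c) = some (sing ℓ c) :=
    heapComb_sing_sing ℓ (cellComb_self_of_rmw orA starA (fun _ => hFF) rfl)
  rw [rmwSem_eq_singleton]
  exact (star_singleton_singleton hc hc).symm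

end SecRSL9
end

section
/- If P and Q are precise relational assertions, then P ⋆ Q is precise, assuming heap combination ⊕ is associative, commutative, and cancellative. -/
namespace SecRSL12

variable {Heap : Type}

def star (op : Heap → Heap → Option Heap) (P Q : Set (Heap × Heap)) : Set (Heap × Heap) :=
  {p | ∃ h1 h1' h2 h2', (h1, h1') ∈ P ∧ (h2, h2') ∈ Q ∧
        op h1 h2 = some p.1 ∧ op h1' h2' = some p.2}

def Precise (op : Heap → Heap → Option Heap) (P : Set (Heap × Heap)) : Prop :=
  ∀ h1 h2,
    (((∃ x, (h1, x) ∈ P) ∧ (∃ x, (h2, x) ∈ P)) ∨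
      ((∃ x, (x, h1) ∈ P) ∧ (∃ x, (x, h2) ∈ P))) →
    ∀ h3 h4 r, op h1 h3 = some r → op h2 h4 = some r → h1 = h2 ∧ h3 = h4

def PreciseOn (op : Heap → Heap → Option Heap) (S : Set Heap) : Prop :=
  ∀ h1 ∈ S, ∀ h2 ∈ S, ∀ h3 h4 r, op h1 h3 = some r → op h2 h4 = some r → h1 = h2 ∧ h3 = h4

def sepConj (op : Heap → Heap → Option Heap) (A B : Set Heap) : Set Heap :=
  {s | ∃ a ∈ A, ∃ b ∈ B, op a b = some s}

section

variable {op : Heap → Heap → Option Heap}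

theorem precise_iff {P : Set (Heap × Heap)} :
    Precise op P ↔ PreciseOn op (Prod.fst '' P) ∧ PreciseOn op (Prod.snd '' P) := by
  simp only [Precise, PreciseOn, Set.mem_image, Prod.exists, exists_and_right, exists_eq_right]
  exact ⟨fun h => ⟨fun h1 m1 h2 m2 => h h1 h2 (.inl ⟨m1, m2⟩),
      fun h1 m1 h2 m2 => h h1 h2 (.inr ⟨m1, m2⟩)⟩,
    fun ⟨hfst, hsnd⟩ h1 h2 hm => hm.elim (fun ⟨m1, m2⟩ => hfst h1 m1 h2 m2)
      (fun ⟨m1, m2⟩ => hsnd h1 m1 h2 m2)⟩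

theorem PreciseOn.mono {S T : Set Heap} (hT : PreciseOn op T) (hST : S ⊆ T) :
    PreciseOn op S :=
  fun h1 m1 h2 m2 => hT h1 (hST m1) h2 (hST m2)

theorem fst_image_star_subset (P Q : Set (Heap × Heap)) :
    Prod.fst '' star op P Q ⊆ sepConj op (Prod.fst '' P) (Prod.fst '' Q) := by
  rintro _ ⟨p, ⟨a, a', b, b', hP, hQ, hab, -⟩, rfl⟩
  exact ⟨a, ⟨_, hP, rfl⟩, b, ⟨_, hQ, rfl⟩, hab⟩

theorem snd_image_star_subset (P Q : Set (Heap × Heap)) :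
    Prod.snd '' star op P Q ⊆ sepConj op (Prod.snd '' P) (Prod.snd '' Q) := by
  rintro _ ⟨p, ⟨a, a', b, b', hP, hQ, -, hab⟩, rfl⟩
  exact ⟨a', ⟨_, hP, rfl⟩, b', ⟨_, hQ, rfl⟩, hab⟩

variable (hassoc : ∀ a b c, (op a b).bind (fun ab => op ab c) = (op b c).bind (fun bc => op a bc))
include hassoc

theorem exists_op_eq_some_of_assoc {a b c s r : Heap} (hab : op a b = some s)
    (hsc : op s c = some r) : ∃ d, op b c = some d ∧ op a d = some r := by
  have h := hassoc a b c
  rw [hab, Option.bind_some, hsc, eq_comm, Option.bind_eq_some_iff] at h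
  exact h

/-- From `(a ⊕ b) ⊕ c = a ⊕ (b ⊕ c)`, precision of `A` pins down `a` and `b ⊕ c`, then
precision of `B` pins down `b` and `c`. -/
theorem PreciseOn.sepConj {A B : Set Heap} (hA : PreciseOn op A) (hB : PreciseOn op B) :
    PreciseOn op (sepConj op A B) := by
  rintro s1 ⟨a1, ha1, b1, hb1, hs1⟩ s2 ⟨a2, ha2, b2, hb2, hs2⟩ c1 c2 r hr1 hr2
  obtain ⟨d1, hd1, hr1'⟩ := exists_op_eq_some_of_assoc hassoc hs1 hr1
  obtain ⟨d2, hd2, hr2'⟩ := exists_op_eq_some_of_assoc hassoc hs2 hr2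
  obtain ⟨rfl, rfl⟩ := hA a1 ha1 a2 ha2 d1 d2 r hr1' hr2'
  obtain ⟨rfl, rfl⟩ := hB b1 hb1 b2 hb2 c1 c2 d1 hd1 hd2
  exact ⟨Option.some.inj (hs1.symm.trans hs2), rfl⟩

end

theorem star_precise_general (op : Heap → Heap → Option Heap)
    (hassoc : ∀ a b c, (op a b).bind (fun ab => op ab c) = (op b c).bind (fun bc => op a bc))
    (P Q : Set (Heap × Heap)) (hP : Precise op P) (hQ : Precise op Q) :
    Precise op (star op P Q) := by
  rw [precise_iff] at hP hQ ⊢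
  exact ⟨(hP.1.sepConj hassoc hQ.1).mono (fst_image_star_subset P Q),
    (hP.2.sepConj hassoc hQ.2).mono (snd_image_star_subset P Q)⟩

theorem star_precise (op : Heap → Heap → Option Heap)
    (hcomm : ∀ a b, op a b = op b a)
    (hassoc : ∀ a b c, (op a b).bind (fun ab => op ab c) = (op b c).bind (fun bc => op a bc))
    (hcancel : ∀ a b b' c, op a b = some c → op a b' = some c → b = b')
    (P Q : Set (Heap × Heap)) (hP : Precise op P) (hQ : Precise op Q) :
    Precise op (star op P Q) :=
  star_precise_general op hassoc P Q hP hQ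

end SecRSL12
end
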